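/- arXiv:1111.0163 — 2 statements merged into one kernel-verified Lean document; each statement's English description precedes it below -/
import Mathlib

section
/- Let K be a global field, S a finite set of places containing the archimedean ones. If Γ ⊂ K_S^n is a discrete I_S-submodule and ξ₁,…,ξ_m ∈ Γ are linearly independent over K (via the diagonal embedding K → K_S), then they are linearly independent over K_S. -/
/-!
Suppose `∑ cᵢ ξᵢ = 0` with `c_{i₀}` nonzero at the place `w`; multiplying by the element of `K_S`
that is `c_{i₀}(w)⁻¹` at `w` and `0` elsewhere, we may assume `c_{i₀}` is `1` at `w` and `0`
elsewhere. For `a ∈ I_S`, replacing each `a cᵢ` (`i ≠ i₀`) by a nearby `S`-integer yields an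
`I_S`-combination of the `ξᵢ` with `i₀`-coefficient `a`, and it lies in a fixed compact set as
soon as `a` is bounded at the places `v ≠ w`. By `K`-independence these are distinct points of the discrete group `Γ`, so only
finitely many such `a` exist, whereas strong approximation at `w` produces infinitely many.
If `S = {w}` and `I_S` is finite instead, `K_w` is compact, hence finite, and the `cᵢ` lie in `K`.
All `K_v` are Hausdorff: a topological field that is not is indiscrete, and strong approximation
at such a place would put a nonzero `S`-integer in every neighbourhood of `0`.
-/

open Filter Topology

theorem IsTopologicalRing.t2Space_or_nhds_zero_eq_top (F : Type*) [DivisionRing F]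
    [TopologicalSpace F] [IsTopologicalRing F] : T2Space F ∨ 𝓝 (0 : F) = ⊤ := by
  rcases (⊥ : Ideal F).closure.eq_bot_or_top with h | h
  · left
    rw [IsTopologicalAddGroup.t2Space_iff_zero_closed, ← closure_subset_iff_isClosed]
    have := congrArg (fun I : Ideal F => (I : Set F)) h
    simp only [Ideal.coe_closure, Submodule.bot_coe] at this
    rw [this]
  · right
    refine eq_top_iff.2 fun s hs => Filter.mem_top.2 (Set.eq_univ_of_forall fun x => ?_)
    have hx : x ∈ (⊥ : Ideal F).closure := h ▸ Submodule.mem_top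
    rw [← SetLike.mem_coe, Ideal.coe_closure, Submodule.bot_coe] at hx
    exact mem_of_mem_nhds ((specializes_iff_mem_closure.2 hx).symm.nhds_le_nhds hs)

theorem AddSubgroup.finite_inter_of_isCompact {G : Type*} [AddGroup G] [TopologicalSpace G]
    [IsTopologicalAddGroup G] [T2Space G] (Γ : AddSubgroup G) [DiscreteTopology Γ] {Q : Set G}
    (hQ : IsCompact Q) : ((Γ : Set G) ∩ Q).Finite := by
  rw [← Subtype.image_preimage_coe]
  exact (tendsto_cofinite_cocompact_iff.1
    (Γ.tendsto_coe_cofinite_of_discrete (isDiscrete_iff_discreteTopology.2 ‹_›)) Q hQ).image _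

section Combinations

variable {K A M ι : Type*} [Field K] [CommRing A] [AddCommGroup M] [Module A M]
  [TopologicalSpace M] [IsTopologicalAddGroup M] [T2Space M] [Fintype ι]
  (φ : K →+* A) (R : Subring K) (Γ : AddSubgroup M) [DiscreteTopology Γ] (ξ : ι → M)

theorem finite_setOf_sum_smul_mem (hΓ : ∀ a ∈ R, ∀ x ∈ Γ, φ a • x ∈ Γ) (hξ : ∀ i, ξ i ∈ Γ)
    (hindep : ∀ c : ι → K, ∑ i, φ (c i) • ξ i = 0 → ∀ i, c i = 0) {Q : Set M}
    (hQ : IsCompact Q) : {r : ι → K | (∀ i, r i ∈ R) ∧ ∑ i, φ (r i) • ξ i ∈ Q}.Finite := by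
  have hinj : Function.Injective fun r : ι → K => ∑ i, φ (r i) • ξ i := by
    intro r r' h
    funext i
    refine sub_eq_zero.1 (hindep (r - r') ?_ i)
    simpa [sub_smul, Finset.sum_sub_distrib, sub_eq_zero] using h
  refine Set.Finite.of_finite_image ((Γ.finite_inter_of_isCompact hQ).subset ?_) hinj.injOn
  rintro _ ⟨r, ⟨hr, hrQ⟩, rfl⟩
  exact ⟨Γ.sum_mem fun i _ => hΓ _ (hr i) _ (hξ i), hrQ⟩

variable [TopologicalSpace A] [ContinuousNeg A] [ContinuousSMul A M]

theorem finite_setOf_mul_one_sub_mem_of_sum_smul_eq_zero (hΓ : ∀ a ∈ R, ∀ x ∈ Γ, φ a • x ∈ Γ) (hξ : ∀ i, ξ i ∈ Γ)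
    (hindep : ∀ c : ι → K, ∑ i, φ (c i) • ξ i = 0 → ∀ i, c i = 0) {C : Set A}
    (hC : IsCompact C) (hCR : ∀ x : A, ∃ a ∈ R, x - φ a ∈ C) {d : ι → A}
    (hd : ∑ i, d i • ξ i = 0) (i₀ : ι) {B : Set A} (hB : IsCompact B) :
    {a ∈ R | φ a * (1 - d i₀) ∈ B}.Finite := by
  classical
  choose near hnearR hnearC using hCR
  let r : K → ι → K := fun a => Function.update (fun i => near (φ a * d i)) i₀ a
  have hQ : IsCompact ((fun e : ι → A => ∑ i, e i • ξ i) '' Set.univ.pi fun _ => B ∪ -C) :=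
    (isCompact_univ_pi fun _ => hB.union hC.neg).image (by fun_prop)
  have hr : Set.InjOn r {a ∈ R | φ a * (1 - d i₀) ∈ B} := fun a _ b _ h => by
    simpa [r] using congrFun h i₀
  refine Set.Finite.of_finite_image
    ((finite_setOf_sum_smul_mem φ R Γ ξ hΓ hξ hindep hQ).subset ?_) hr
  rintro _ ⟨a, ⟨haR, haB⟩, rfl⟩
  refine ⟨fun i => ?_, fun i => φ (r a i) - φ a * d i, fun i _ => ?_, ?_⟩
  · by_cases hi : i = i₀
    · subst hi
      simpa [r] using haR
    · simpa [r, hi] using hnearR _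
  · by_cases hi : i = i₀
    · subst hi
      exact Or.inl (by simpa [r, mul_sub] using haB)
    · exact Or.inr (by simpa [r, hi] using hnearC (φ a * d i))
  · simp only [sub_smul, Finset.sum_sub_distrib, mul_smul, ← Finset.smul_sum, hd, smul_zero,
      sub_zero]

end Combinations

section Places

variable {K : Type*} [Field K] {S : Type*} {Kv : S → Type*} [∀ v, Field (Kv v)]
  [∀ v, TopologicalSpace (Kv v)] (ι : ∀ v, K →+* Kv v) (R : Subring K)

theorem t2Space_of_strongApprox [Finite S] [∀ v, IsTopologicalRing (Kv v)]
    (hRdisc : ∃ U ∈ 𝓝 (0 : ∀ v, Kv v), ∀ a ∈ R, RingHom.pi ι a ∈ U → a = 0) (u : S)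
    (hSA : ∀ U ∈ 𝓝 (0 : ∀ v : {v : S // v ≠ u}, Kv v),
      ∃ a ∈ R, a ≠ 0 ∧ (fun v : {v : S // v ≠ u} => ι v a) ∈ U) :
    T2Space (Kv u) := by
  refine (IsTopologicalRing.t2Space_or_nhds_zero_eq_top (Kv u)).resolve_right fun htop => ?_
  obtain ⟨U, hU, hRU⟩ := hRdisc
  rw [nhds_pi, Filter.mem_pi'] at hU
  obtain ⟨_, t, ht, htU⟩ := hU
  obtain ⟨a, haR, ha0, hat⟩ :=
    hSA (Set.univ.pi fun v => t v) (set_pi_mem_nhds Set.finite_univ fun v _ => ht v)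
  refine ha0 (hRU a haR (htU fun v _ => ?_))
  by_cases hv : v = u
  · subst hv
    simp [Filter.mem_top.1 (htop ▸ ht v)]
  · exact hat ⟨v, hv⟩ trivial

theorem infinite_setOf_forall_ne_mem_of_strongApprox [Finite S] {w u : S} (huw : u ≠ w)
    [T1Space (Kv u)]
    (hSA : ∀ U ∈ 𝓝 (0 : ∀ v : {v : S // v ≠ w}, Kv v),
      ∃ a ∈ R, a ≠ 0 ∧ (fun v : {v : S // v ≠ w} => ι v a) ∈ U)
    {B : ∀ v, Set (Kv v)} (hB : ∀ v, B v ∈ 𝓝 0) :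
    {a ∈ R | ∀ v ≠ w, ι v a ∈ B v}.Infinite := by
  intro hfin
  set F := ι u '' ({a ∈ R | ∀ v ≠ w, ι v a ∈ B v} \ {0})
  have hF : Fᶜ ∈ 𝓝 (0 : Kv u) :=
    ((hfin.sdiff.image _).isClosed.isOpen_compl).mem_nhds
      fun ⟨a, ⟨_, ha0⟩, ha⟩ => ha0 ((map_eq_zero _).1 ha)
  obtain ⟨a, haR, ha0, haB, haF⟩ := hSA _ <| inter_mem
    (set_pi_mem_nhds Set.finite_univ fun v _ => hB v)
    ((continuous_apply (⟨u, huw⟩ : {v : S // v ≠ w})).continuousAt.preimage_mem_nhds hF)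
  exact haF ⟨a, ⟨⟨haR, fun v hv => haB ⟨v, hv⟩ trivial⟩, ha0⟩, rfl⟩

theorem surjective_of_finite_of_cocompact [∀ v, IsTopologicalRing (Kv v)] (w : S)
    [T2Space (Kv w)] (hdense : DenseRange (ι w)) (hR : (R : Set K).Finite) {C : Set (∀ v, Kv v)}
    (hC : IsCompact C) (hCR : ∀ x : ∀ v, Kv v, ∃ a ∈ R, x - RingHom.pi ι a ∈ C) :
    Function.Surjective (ι w) := by
  have : CompactSpace (∀ v, Kv v) := by
    refine ⟨((hR.image (RingHom.pi ι)).isCompact.add hC).of_isClosed_subset isClosed_univ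
      fun x _ => ?_⟩
    obtain ⟨a, haR, ha⟩ := hCR x
    exact ⟨_, ⟨a, haR, rfl⟩, _, ha, add_sub_cancel _ _⟩
  have : CompactSpace (Kv w) :=
    (Function.surjective_eval w).compactSpace (continuous_apply w)
  have := DivisionRing.finite_of_compactSpace_of_t2Space (K := Kv w)
  exact Set.range_eq_univ.1 (hdense.closure_range ▸ (isClosed_discrete _).closure_eq.symm)

theorem finite_setOf_forall_ne_mem_of_sum_smul_eq_zero {M I : Type*} [AddCommGroup M] [Module (∀ v, Kv v) M]
    [TopologicalSpace M] [IsTopologicalAddGroup M] [T2Space M] [ContinuousSMul (∀ v, Kv v) M]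
    [∀ v, IsTopologicalRing (Kv v)] [Fintype I] (Γ : AddSubgroup M) [DiscreteTopology Γ]
    (ξ : I → M) (hΓ : ∀ a ∈ R, ∀ x ∈ Γ, RingHom.pi ι a • x ∈ Γ) (hξ : ∀ i, ξ i ∈ Γ)
    (hindep : ∀ c : I → K, ∑ i, RingHom.pi ι (c i) • ξ i = 0 → ∀ i, c i = 0)
    {C : Set (∀ v, Kv v)} (hC : IsCompact C)
    (hCR : ∀ x : ∀ v, Kv v, ∃ a ∈ R, x - RingHom.pi ι a ∈ C) {c : I → ∀ v, Kv v}
    (hc : ∑ i, c i • ξ i = 0) {i₀ : I} {w : S} (hw : c i₀ w ≠ 0) {B : ∀ v, Set (Kv v)}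
    (hBc : ∀ v, IsCompact (B v)) (hB0 : ∀ v, (0 : Kv v) ∈ B v) :
    {a ∈ R | ∀ v ≠ w, ι v a ∈ B v}.Finite := by
  classical
  let d : I → ∀ v, Kv v := fun i => Pi.single w (c i₀ w)⁻¹ * c i
  have hd : ∑ i, d i • ξ i = 0 := by simp only [d, mul_smul, ← Finset.smul_sum, hc, smul_zero]
  refine (finite_setOf_mul_one_sub_mem_of_sum_smul_eq_zero (RingHom.pi ι) R Γ ξ hΓ hξ hindep hC hCR hd i₀
    (isCompact_univ_pi hBc)).subset fun a ⟨haR, haB⟩ => ⟨haR, fun v _ => ?_⟩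
  by_cases hv : v = w
  · subst hv
    simp [d, hw, hB0]
  · simpa [d, hv] using haB v hv

end Places

/-- `Kv v` stands for the completion `K_v` and `R` for the ring `I_S` of `S`-integers;
`hRdisc`, `hRcocompact` and `hSA` are the properties of `I_S` the proof needs: its diagonal image
in `K_S` is discrete and cocompact, and it satisfies strong approximation away from any place. -/
theorem linearIndependent_KS_of_linearIndependent_K_general
    {K : Type*} [Field K]
    {S : Type*} [Fintype S]
    {Kv : S → Type*} [∀ v, Field (Kv v)] [∀ v, TopologicalSpace (Kv v)]
    [∀ v, IsTopologicalRing (Kv v)] [∀ v, LocallyCompactSpace (Kv v)]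
    (ι : ∀ v, K →+* Kv v)
    (hdense : ∀ v, DenseRange (ι v))
    (R : Subring K)
    (hRdisc : ∃ U ∈ nhds (0 : ∀ v, Kv v), ∀ a ∈ R, (fun v => ι v a) ∈ U → a = 0)
    (hRcocompact : ∃ C : Set (∀ v, Kv v), IsCompact C ∧
      ∀ x : ∀ v, Kv v, ∃ a ∈ R, (x - fun v => ι v a) ∈ C)
    (hSA : ∀ w : S, ∀ U ∈ nhds (0 : ∀ v : {v : S // v ≠ w}, Kv v),
      ∃ a ∈ R, a ≠ 0 ∧ (fun v : {v : S // v ≠ w} => ι v a) ∈ U)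
    {n : ℕ} (Γ : AddSubgroup (Fin n → ∀ v, Kv v))
    (hΓmod : ∀ a ∈ R, ∀ ξ ∈ Γ, (fun i v => ι v a * ξ i v) ∈ Γ)
    (hΓdisc : DiscreteTopology Γ)
    {m : ℕ} (ξ : Fin m → (Fin n → ∀ v, Kv v)) (hξΓ : ∀ i, ξ i ∈ Γ)
    (hindep : ∀ c : Fin m → K,
      (∑ i, (fun j v => ι v (c i) * ξ i j v)) = 0 → ∀ i, c i = 0) :
    ∀ c : Fin m → ∀ v, Kv v, (∑ i, (fun j v => c i v * ξ i j v)) = 0 → ∀ i, c i = 0 := by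
  have := fun v => t2Space_of_strongApprox ι R hRdisc v (hSA v)
  obtain ⟨C, hC, hCR⟩ := hRcocompact
  intro c hc i₀
  by_contra hi₀
  obtain ⟨w, hw⟩ := Function.ne_iff.1 hi₀
  choose B hBc hB0 using fun v => exists_compact_mem_nhds (0 : Kv v)
  have hfin := finite_setOf_forall_ne_mem_of_sum_smul_eq_zero ι R Γ ξ hΓmod hξΓ hindep hC hCR hc hw hBc
    fun v => mem_of_mem_nhds (hB0 v)
  by_cases hS : ∀ v, v = w
  · by_cases hR : (R : Set K).Finite
    · choose k hk using fun i =>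
        surjective_of_finite_of_cocompact ι R w (hdense w) hR hC hCR (c i w)
      obtain rfl : (fun i => RingHom.pi ι (k i)) = c := funext fun i => funext fun v => by
        obtain rfl := hS v
        exact hk i
      exact hi₀ (by simp only [hindep k hc i₀, map_zero])
    · exact hR (hfin.subset fun a ha => ⟨ha, fun v hv => absurd (hS v) hv⟩)
  · obtain ⟨u, hu⟩ := not_forall.1 hS
    exact infinite_setOf_forall_ne_mem_of_strongApprox ι R hu (hSA w) hB0 hfin

/-- **Linear independence over `I_S` implies linear independence over `K_S`.**
`K` is a global field, `S` a finite nonempty set of places, `Kv v` the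
completion of `K` at `v ∈ S` (a locally compact topological field in which `K`
is dense via `ι v`), `K_S = ∏_{v∈S} Kv v`, and `R ⊆ K` is the ring `I_S` of
`S`-integers: its diagonal image in `K_S` is discrete and cocompact, and it
satisfies strong approximation (nonzero elements of `R` can be made
simultaneously small at all places of `S` except any one chosen place `w`).
If `Γ ⊆ K_S^n` is a discrete `I_S`-submodule and `ξ 1, …, ξ m ∈ Γ` are
linearly independent over `K` (embedded diagonally in `K_S`), then they are
linearly independent over `K_S`. -/
theorem linearIndependent_KS_of_linearIndependent_K
    {K : Type*} [Field K]
    {S : Type*} [Fintype S] [Nonempty S]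
    {Kv : S → Type*} [∀ v, Field (Kv v)] [∀ v, TopologicalSpace (Kv v)]
    [∀ v, IsTopologicalRing (Kv v)] [∀ v, LocallyCompactSpace (Kv v)]
    (ι : ∀ v, K →+* Kv v)
    (hdense : ∀ v, DenseRange (ι v))
    (R : Subring K)
    (hRdisc : ∃ U ∈ nhds (0 : ∀ v, Kv v), ∀ a ∈ R, (fun v => ι v a) ∈ U → a = 0)
    (hRcocompact : ∃ C : Set (∀ v, Kv v), IsCompact C ∧
      ∀ x : ∀ v, Kv v, ∃ a ∈ R, (x - fun v => ι v a) ∈ C)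
    (hSA : ∀ w : S, ∀ U ∈ nhds (0 : ∀ v : {v : S // v ≠ w}, Kv v),
      ∃ a ∈ R, a ≠ 0 ∧ (fun v : {v : S // v ≠ w} => ι v a) ∈ U)
    {n : ℕ} (Γ : AddSubgroup (Fin n → ∀ v, Kv v))
    (hΓmod : ∀ a ∈ R, ∀ ξ ∈ Γ, (fun i v => ι v a * ξ i v) ∈ Γ)
    (hΓdisc : DiscreteTopology Γ)
    {m : ℕ} (ξ : Fin m → (Fin n → ∀ v, Kv v)) (hξΓ : ∀ i, ξ i ∈ Γ)
    (hindep : ∀ c : Fin m → K,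
      (∑ i, (fun j v => ι v (c i) * ξ i j v)) = 0 → ∀ i, c i = 0) :
    ∀ c : Fin m → ∀ v, Kv v, (∑ i, (fun j v => c i v * ξ i j v)) = 0 → ∀ i, c i = 0 :=
  linearIndependent_KS_of_linearIndependent_K_general ι hdense R hRdisc hRcocompact hSA Γ hΓmod
    hΓdisc ξ hξΓ hindep
end

section
/- There exists a constant A > 1 depending only on K and S such that: for any ξ ∈ K_S^n with cont(ξ) ≠ 0 there exists a unit a ∈ I_S^* with A^{-|S|} cont(ξ) ≤ ‖aξ‖^{|S|} ≤ A^{|S|} cont(ξ). -/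
open MeasureTheory
open scoped BigOperators ENNReal NNReal

section SAdic

variable {Sr Sc Sf : Type} [Fintype Sr] [Fintype Sc] [Fintype Sf]

/-- The completion of a global field at a place in `S = Sr ⊕ Sc ⊕ Sf`:
`ℝ` at real places, `ℂ` at complex places, and a non-archimedean local field
`Kf v` at the finite places. -/
@[reducible] def PlaceField (Kf : Sf → Type) : Sr ⊕ Sc ⊕ Sf → Type
  | .inl _ => ℝ
  | .inr (.inl _) => ℂ
  | .inr (.inr v) => Kf v

variable (Kf : Sf → Type) [∀ v, NontriviallyNormedField (Kf v)]

noncomputable instance : ∀ v : Sr ⊕ Sc ⊕ Sf, Field (PlaceField (Sr := Sr) (Sc := Sc) Kf v)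
  | .inl _ => inferInstanceAs (Field ℝ)
  | .inr (.inl _) => inferInstanceAs (Field ℂ)
  | .inr (.inr v) => inferInstanceAs (Field (Kf v))

noncomputable instance : ∀ v : Sr ⊕ Sc ⊕ Sf, TopologicalSpace (PlaceField (Sr := Sr) (Sc := Sc) Kf v)
  | .inl _ => inferInstanceAs (TopologicalSpace ℝ)
  | .inr (.inl _) => inferInstanceAs (TopologicalSpace ℂ)
  | .inr (.inr v) => inferInstanceAs (TopologicalSpace (Kf v))

variable [∀ v, MeasurableSpace (Kf v)]

instance : ∀ v : Sr ⊕ Sc ⊕ Sf, MeasurableSpace (PlaceField (Sr := Sr) (Sc := Sc) Kf v)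
  | .inl _ => inferInstanceAs (MeasurableSpace ℝ)
  | .inr (.inl _) => inferInstanceAs (MeasurableSpace ℂ)
  | .inr (.inr v) => inferInstanceAs (MeasurableSpace (Kf v))

/-- The normalized norm on `K_v^n`: the Euclidean norm at real places, the
*square* of the Euclidean norm at complex places, and the sup norm at
non-archimedean places. -/
noncomputable def placeNorm (n : ℕ) :
    ∀ v : Sr ⊕ Sc ⊕ Sf, (Fin n → PlaceField (Sr := Sr) (Sc := Sc) Kf v) → ℝ
  | .inl _ => fun x => Real.sqrt (∑ i, x i ^ 2)
  | .inr (.inl _) => fun x => ∑ i, ‖x i‖ ^ 2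
  | .inr (.inr _) => fun x => ⨆ i, ‖x i‖

/-- The norm `‖ξ‖ = max_{v∈S} ‖ξ_v‖_v` on `K_S^n`. -/
noncomputable def SNorm {n : ℕ}
    (ξ : Fin n → ∀ v : Sr ⊕ Sc ⊕ Sf, PlaceField (Sr := Sr) (Sc := Sc) Kf v) : ℝ :=
  ⨆ v, placeNorm Kf n v (fun i => ξ i v)

/-- The content `cont(ξ) = ∏_{v∈S} ‖ξ_v‖_v` on `K_S^n`. -/
noncomputable def SCont {n : ℕ}
    (ξ : Fin n → ∀ v : Sr ⊕ Sc ⊕ Sf, PlaceField (Sr := Sr) (Sc := Sc) Kf v) : ℝ :=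
  ∏ v, placeNorm Kf n v (fun i => ξ i v)

/-- The open ball `B_r(K_S^n)` of radius `r` centred at `0`. -/
noncomputable def SBall (n : ℕ) (r : ℝ) :
    Set (Fin n → ∀ v : Sr ⊕ Sc ⊕ Sf, PlaceField (Sr := Sr) (Sc := Sc) Kf v) :=
  {ξ | SNorm Kf ξ < r}

variable (μf : ∀ v, Measure (Kf v))

/-- The normalized Haar measure on `K_v`: Lebesgue measure at real and complex
places, the given Haar measure `μf v` (normalized by `μf v (I_v) = 1`) at the
finite places. -/
noncomputable def placeMeasure :
    ∀ v : Sr ⊕ Sc ⊕ Sf, Measure (PlaceField (Sr := Sr) (Sc := Sc) Kf v)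
  | .inl _ => volume
  | .inr (.inl _) => volume
  | .inr (.inr v) => μf v

def placeMeasureSigmaFinite [∀ v, SigmaFinite (μf v)] :
    ∀ v : Sr ⊕ Sc ⊕ Sf, SigmaFinite (placeMeasure (Sr := Sr) (Sc := Sc) Kf μf v)
  | .inl _ => inferInstanceAs (SigmaFinite (volume : Measure ℝ))
  | .inr (.inl _) => inferInstanceAs (SigmaFinite (volume : Measure ℂ))
  | .inr (.inr v) => inferInstanceAs (SigmaFinite (μf v))

/-- The normalized Haar measure `vol` on `K_S^n`, the product of the
normalized measures at the places of `S`. -/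
noncomputable def SVol [∀ v, SigmaFinite (μf v)] (n : ℕ) :
    Measure (Fin n → ∀ v : Sr ⊕ Sc ⊕ Sf, PlaceField (Sr := Sr) (Sc := Sc) Kf v) :=
  haveI := placeMeasureSigmaFinite Kf μf
  Measure.pi fun _ => Measure.pi (placeMeasure Kf μf)


variable {K : Type} [Field K]

/-- `K`-linear independence (via the diagonal embedding of `K` in `K_S`) of a
family of vectors in `K_S^n`. -/
def KIndep (ι : ∀ v : Sr ⊕ Sc ⊕ Sf, K →+* PlaceField (Sr := Sr) (Sc := Sc) Kf v)
    {n m : ℕ} (f : Fin m → (Fin n → ∀ v, PlaceField (Sr := Sr) (Sc := Sc) Kf v)) : Prop :=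
  ∀ c : Fin m → K, (∑ i, (fun j v => ι v (c i) * f i j v)) = 0 → ∀ i, c i = 0

/-- `K_S`-linear independence of a family of vectors in `K_S^n`. -/
def KSIndep {n m : ℕ}
    (f : Fin m → (Fin n → ∀ v, PlaceField (Sr := Sr) (Sc := Sc) Kf v)) : Prop :=
  ∀ c : Fin m → (∀ v, PlaceField (Sr := Sr) (Sc := Sc) Kf v),
    (∑ i, (fun j v => c i v * f i j v)) = 0 → ∀ i, c i = 0

/-- The `m`-th successive minimum of `Γ ⊆ K_S^n`:
`ι_m = inf {r > 0 : dim_K span_K (B_r(K_S^n) ∩ Γ) ≥ m}`, expressed via the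
existence of `m` vectors of `Γ ∩ B_r` that are linearly independent over `K`. -/
noncomputable def sMinimum
    (ι : ∀ v : Sr ⊕ Sc ⊕ Sf, K →+* PlaceField (Sr := Sr) (Sc := Sc) Kf v)
    {n : ℕ} (Γ : Set (Fin n → ∀ v, PlaceField (Sr := Sr) (Sc := Sc) Kf v))
    (m : ℕ) : ℝ :=
  sInf {r : ℝ | 0 < r ∧ ∃ f : Fin m → (Fin n → ∀ v, PlaceField (Sr := Sr) (Sc := Sc) Kf v),
    (∀ i, f i ∈ Γ ∧ SNorm Kf (f i) < r) ∧ KIndep Kf ι f}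

/-- The normalized absolute value on `K_v`: the usual absolute value at real
places, the *square* of the usual absolute value at complex places, and the
norm at non-archimedean places. -/
noncomputable def placeAbs :
    ∀ v : Sr ⊕ Sc ⊕ Sf, PlaceField (Sr := Sr) (Sc := Sc) Kf v → ℝ
  | .inl _ => fun x => |x|
  | .inr (.inl _) => fun x => ‖x‖ ^ 2
  | .inr (.inr _) => fun x => ‖x‖

/-- The covering radius of `Γ ⊆ K_S^n`:
`inf {r > 0 : B_r(K_S^n) + Γ = K_S^n}`. -/
noncomputable def covRadius {n : ℕ}
    (Γ : Set (Fin n → ∀ v, PlaceField (Sr := Sr) (Sc := Sc) Kf v)) : ℝ :=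
  sInf {r : ℝ | 0 < r ∧
    ∀ x : Fin n → ∀ v, PlaceField (Sr := Sr) (Sc := Sc) Kf v,
      ∃ γ ∈ Γ, SNorm Kf (x - γ) < r}

end SAdic

/-!
Put `G = cont(ξ)^{1/|S|}` and apply the Dirichlet hypothesis to `r_v = ‖ξ_v‖_v / G`, whose
product is `1`. The resulting unit `a` brings every `|a|_v ‖ξ_v‖_v = ‖(aξ)_v‖_v` within a
factor `A₀` of `G`, hence also their maximum `‖aξ‖`; raising to the power `|S|` gives the
bounds, since `G^{|S|} = cont(ξ)`.
-/

theorem exists_pos_pow_card_eq_prod {ι : Type*} [Fintype ι] {N : ι → ℝ}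
    (hN : ∀ i, 0 < N i) :
    ∃ G : ℝ, 0 < G ∧ G ^ Fintype.card ι = ∏ i, N i := by
  cases isEmpty_or_nonempty ι
  · exact ⟨1, one_pos, by simp⟩
  · exact ⟨(∏ i, N i) ^ ((Fintype.card ι : ℝ)⁻¹),
      Real.rpow_pos_of_pos (Finset.prod_pos fun i _ => hN i) _,
      Real.rpow_inv_natCast_pow (Finset.prod_nonneg fun i _ => (hN i).le) Fintype.card_ne_zero⟩

theorem iSup_pow_card_mem_Icc {ι : Type*} [Fintype ι] {x : ι → ℝ} {G A : ℝ}
    (hG : 0 < G) (hA : 0 < A) (hx : ∀ i, x i / G ∈ Set.Icc A⁻¹ A) :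
    (⨆ i, x i) ^ Fintype.card ι ∈
      Set.Icc (A⁻¹ ^ Fintype.card ι * G ^ Fintype.card ι)
        (A ^ Fintype.card ι * G ^ Fintype.card ι) := by
  have hlower : ∀ i, A⁻¹ * G ≤ x i := fun i => (le_div_iff₀ hG).1 (hx i).1
  have hupper : ∀ i, x i ≤ A * G := fun i => (div_le_iff₀ hG).1 (hx i).2
  rw [← mul_pow, ← mul_pow]
  constructor
  · rw [← Finset.card_univ, ← Finset.prod_const, ← Finset.prod_const]
    exact Finset.prod_le_prod (fun _ _ => by positivity)
      fun i _ => (hlower i).trans (le_ciSup (Set.finite_range x).bddAbove i)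
  · have hsup_nonneg : 0 ≤ ⨆ i, x i :=
      Real.iSup_nonneg fun i => (by positivity : 0 ≤ A⁻¹ * G).trans (hlower i)
    exact pow_le_pow_left₀ hsup_nonneg (Real.iSup_le hupper (by positivity)) _

section SAdic

variable {Sr Sc Sf : Type} (Kf : Sf → Type) [∀ v, NontriviallyNormedField (Kf v)]

theorem placeNorm_nonneg (n : ℕ) (v : Sr ⊕ Sc ⊕ Sf)
    (x : Fin n → PlaceField (Sr := Sr) (Sc := Sc) Kf v) :
    0 ≤ placeNorm Kf n v x := by
  match v with
  | .inl _ => exact Real.sqrt_nonneg _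
  | .inr (.inl _) => exact Finset.sum_nonneg fun i _ => sq_nonneg _
  | .inr (.inr _) => exact Real.iSup_nonneg fun i => norm_nonneg _

theorem placeNorm_const_mul (n : ℕ) (v : Sr ⊕ Sc ⊕ Sf)
    (a : PlaceField (Sr := Sr) (Sc := Sc) Kf v)
    (x : Fin n → PlaceField (Sr := Sr) (Sc := Sc) Kf v) :
    placeNorm Kf n v (fun i => a * x i) = placeAbs Kf v a * placeNorm Kf n v x := by
  match v with
  | .inl _ =>
    show Real.sqrt (∑ i, (a * x i) ^ 2) = |a| * Real.sqrt (∑ i, x i ^ 2)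
    simp_rw [mul_pow, ← Finset.mul_sum]
    rw [Real.sqrt_mul (sq_nonneg a), Real.sqrt_sq_eq_abs]
  | .inr (.inl _) =>
    show ∑ i, ‖a * x i‖ ^ 2 = ‖a‖ ^ 2 * ∑ i, ‖x i‖ ^ 2
    simp_rw [norm_mul, mul_pow, ← Finset.mul_sum]
  | .inr (.inr _) =>
    show ⨆ i, ‖a * x i‖ = ‖a‖ * ⨆ i, ‖x i‖
    simp_rw [norm_mul]
    exact (Real.mul_iSup_of_nonneg (norm_nonneg a) _).symm

variable {n : ℕ}

theorem SNorm_const_mul (c : ∀ v, PlaceField (Sr := Sr) (Sc := Sc) Kf v)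
    (ξ : Fin n → ∀ v, PlaceField (Sr := Sr) (Sc := Sc) Kf v) :
    SNorm Kf (fun i v => c v * ξ i v) =
      ⨆ v, placeAbs Kf v (c v) * placeNorm Kf n v (fun i => ξ i v) :=
  iSup_congr fun v => placeNorm_const_mul Kf n v (c v) (fun i => ξ i v)

theorem placeNorm_pos_of_SCont_ne_zero [Fintype Sr] [Fintype Sc] [Fintype Sf]
    {ξ : Fin n → ∀ v, PlaceField (Sr := Sr) (Sc := Sc) Kf v}
    (hξ : SCont Kf ξ ≠ 0) (v : Sr ⊕ Sc ⊕ Sf) : 0 < placeNorm Kf n v (fun i => ξ i v) :=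
  (placeNorm_nonneg Kf n v _).lt_of_ne' fun h => hξ (Finset.prod_eq_zero (Finset.mem_univ v) h)

end SAdic

theorem exists_unit_balancing_content_general
    {Sr Sc Sf : Type} [Fintype Sr] [Fintype Sc] [Fintype Sf]
    (Kf : Sf → Type) [∀ v, NontriviallyNormedField (Kf v)]
    {K : Type} [Field K]
    (ι : ∀ v : Sr ⊕ Sc ⊕ Sf, K →+* PlaceField (Sr := Sr) (Sc := Sc) Kf v)
    (R : Subring K)
    (hDir : ∃ A₀ : ℝ, 1 < A₀ ∧ ∀ r : (Sr ⊕ Sc ⊕ Sf) → ℝ,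
      (∀ v, 0 < r v) → (∏ v, r v) = 1 →
      ∃ a : K, a ∈ R ∧ a ≠ 0 ∧ a⁻¹ ∈ R ∧
        ∀ v, A₀⁻¹ ≤ placeAbs (Sr := Sr) (Sc := Sc) Kf v (ι v a) * r v ∧
          placeAbs (Sr := Sr) (Sc := Sc) Kf v (ι v a) * r v ≤ A₀)
    (n : ℕ) :
    ∃ A : ℝ, 1 < A ∧
      ∀ ξ : Fin n → ∀ v, PlaceField (Sr := Sr) (Sc := Sc) Kf v,
        SCont (Sr := Sr) (Sc := Sc) Kf ξ ≠ 0 →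
        ∃ a : K, a ∈ R ∧ a ≠ 0 ∧ a⁻¹ ∈ R ∧
          A⁻¹ ^ Fintype.card (Sr ⊕ Sc ⊕ Sf) * SCont (Sr := Sr) (Sc := Sc) Kf ξ ≤
            SNorm (Sr := Sr) (Sc := Sc) Kf (fun i v => ι v a * ξ i v) ^
              Fintype.card (Sr ⊕ Sc ⊕ Sf) ∧
          SNorm (Sr := Sr) (Sc := Sc) Kf (fun i v => ι v a * ξ i v) ^
              Fintype.card (Sr ⊕ Sc ⊕ Sf) ≤
            A ^ Fintype.card (Sr ⊕ Sc ⊕ Sf) * SCont (Sr := Sr) (Sc := Sc) Kf ξ := by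
  obtain ⟨A₀, hA₀, hDir⟩ := hDir
  refine ⟨A₀, hA₀, fun ξ hξ => ?_⟩
  set N := fun v => placeNorm Kf n v (fun i => ξ i v)
  have hN : ∀ v, 0 < N v := placeNorm_pos_of_SCont_ne_zero Kf hξ
  obtain ⟨G, hG, hGcont⟩ := exists_pos_pow_card_eq_prod hN
  obtain ⟨a, haR, ha0, haiR, hbal⟩ := hDir (fun v => N v / G) (fun v => div_pos (hN v) hG) (by
    rw [Finset.prod_div_distrib, Finset.prod_const, Finset.card_univ, hGcont]
    exact div_self (Finset.prod_pos fun v _ => hN v).ne')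
  refine ⟨a, haR, ha0, haiR, ?_⟩
  have hcont : SCont Kf ξ = G ^ Fintype.card (Sr ⊕ Sc ⊕ Sf) := hGcont.symm
  rw [SNorm_const_mul, hcont]
  exact iSup_pow_card_mem_Icc hG (zero_lt_one.trans hA₀) fun v => by
    rw [mul_div_assoc]
    exact hbal v

/-- **Balancing contents and norms by `S`-units (Lemma 8 of the paper).**
By the Dirichlet `S`-unit theorem the units of `I_S` map onto a cocompact
lattice of the hypersurface `{(r_v) ∈ ℝ_{>0}^S : ∏ r_v = 1}` (hypothesis
`hDir`).  Hence there is `A > 1`, depending only on `K` and `S`, such that for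
every `ξ ∈ K_S^n` with `cont ξ ≠ 0` there is a unit `a ∈ I_S^*` with
`A^{-|S|} cont ξ ≤ ‖a ξ‖^{|S|} ≤ A^{|S|} cont ξ`. -/
theorem exists_unit_balancing_content
    {Sr Sc Sf : Type} [Fintype Sr] [Fintype Sc] [Fintype Sf]
    [Nonempty (Sr ⊕ Sc ⊕ Sf)]
    (Kf : Sf → Type) [∀ v, NontriviallyNormedField (Kf v)]
    [∀ v, IsUltrametricDist (Kf v)] [∀ v, CompleteSpace (Kf v)]
    [∀ v, MeasurableSpace (Kf v)] [∀ v, BorelSpace (Kf v)]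
    (μf : ∀ v, Measure (Kf v)) [∀ v, SigmaFinite (μf v)]
    [∀ v, (μf v).IsAddHaarMeasure]
    (hnormμ : ∀ v, μf v (Metric.closedBall 0 1) = 1)
    (q : Sf → ℕ) (hq : ∀ v, 1 < q v)
    (hϖ : ∀ v, ∃ ϖ : Kf v, ‖ϖ‖ = ((q v : ℝ))⁻¹)
    (hval : ∀ v, ∀ x : Kf v, x ≠ 0 → ∃ k : ℤ, ‖x‖ = (q v : ℝ) ^ k)
    {K : Type} [Field K]
    (ι : ∀ v : Sr ⊕ Sc ⊕ Sf, K →+* PlaceField (Sr := Sr) (Sc := Sc) Kf v)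
    (R : Subring K)
    (hRdisc : ∃ ε > (0:ℝ), ∀ a ∈ R, a ≠ 0 →
      ε ≤ ⨆ v, placeAbs (Sr := Sr) (Sc := Sc) Kf v (ι v a))
    (hRcc : ∃ B : ℝ, ∀ x : ∀ v, PlaceField (Sr := Sr) (Sc := Sc) Kf v,
      ∃ a ∈ R, (⨆ v, placeAbs (Sr := Sr) (Sc := Sc) Kf v (x v - ι v a)) ≤ B)
    (hDir : ∃ A₀ : ℝ, 1 < A₀ ∧ ∀ r : (Sr ⊕ Sc ⊕ Sf) → ℝ,
      (∀ v, 0 < r v) → (∏ v, r v) = 1 →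
      ∃ a : K, a ∈ R ∧ a ≠ 0 ∧ a⁻¹ ∈ R ∧
        ∀ v, A₀⁻¹ ≤ placeAbs (Sr := Sr) (Sc := Sc) Kf v (ι v a) * r v ∧
          placeAbs (Sr := Sr) (Sc := Sc) Kf v (ι v a) * r v ≤ A₀)
    (n : ℕ) :
    ∃ A : ℝ, 1 < A ∧
      ∀ ξ : Fin n → ∀ v, PlaceField (Sr := Sr) (Sc := Sc) Kf v,
        SCont (Sr := Sr) (Sc := Sc) Kf ξ ≠ 0 →
        ∃ a : K, a ∈ R ∧ a ≠ 0 ∧ a⁻¹ ∈ R ∧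
          A⁻¹ ^ Fintype.card (Sr ⊕ Sc ⊕ Sf) * SCont (Sr := Sr) (Sc := Sc) Kf ξ ≤
            SNorm (Sr := Sr) (Sc := Sc) Kf (fun i v => ι v a * ξ i v) ^
              Fintype.card (Sr ⊕ Sc ⊕ Sf) ∧
          SNorm (Sr := Sr) (Sc := Sc) Kf (fun i v => ι v a * ξ i v) ^
              Fintype.card (Sr ⊕ Sc ⊕ Sf) ≤
            A ^ Fintype.card (Sr ⊕ Sc ⊕ Sf) * SCont (Sr := Sr) (Sc := Sc) Kf ξ :=
  exists_unit_balancing_content_general Kf ι R hDir n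
end
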